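/- For b ≥ 1, let α_{k,n}^{(b)} := [u^{n-k}] (u/h_b(u))^{n+1} with h_b(u) = ∑_{j=1}^{b} ((-1)^{j-1}/b) binom(b,j) binom(b,j-1) u^j. Then for n ≥ 3, α_{n-3,n}^{(b)} = ((n+1)/12) * (((3n^2+9n+7)/12) b^3 - ((3n^2-3n-11)/12) b^2 - ((3n+2)/3) b - 1) * b * (b-1)^2. -/

import Mathlib

open PowerSeries

/-- The power series `h_b(u)/u = ∑_{i=0}^{b-1} ((-1)^i/b) binom(b,i+1) binom(b,i) u^i`,
where `h_b(u) = ∑_{j=1}^{b} ((-1)^{j-1}/b) binom(b,j) binom(b,j-1) u^j`. For `b ≥ 1` it has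
constant term `1`, so that `u/h_b(u) = (hDivU b)⁻¹` is a well-defined formal power series. -/
noncomputable def hDivU (b : ℕ) : PowerSeries ℚ :=
  ∑ i ∈ Finset.range b,
    PowerSeries.C ((-1 : ℚ) ^ i / b * (Nat.choose b (i + 1)) * (Nat.choose b i)) *
      PowerSeries.X ^ i

/-- Coefficient extraction `[u^d] F` for an integer index `d`, with the convention that
`[u^d] F = 0` for `d < 0`. -/
noncomputable def coeffZ (d : ℤ) (F : PowerSeries ℚ) : ℚ :=
  if 0 ≤ d then PowerSeries.coeff d.toNat F else 0

/-- `α_{k,n}^{(b)} = [u^{n-k}] (u/h_b(u))^{n+1}`. -/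
noncomputable def alphaC (b k n : ℕ) : ℚ :=
  coeffZ ((n : ℤ) - (k : ℤ)) ((hDivU b)⁻¹ ^ (n + 1))

/-!
Only the coefficients of `u⁰, …, u³` in `h_b(u)/u` matter. If `F` has constant term `1`, the
coefficient of `u³` in `G ^ m` (`G = F⁻¹`) is a polynomial in `m` and in the first coefficients of
`G`, and those are obtained from `F * G = 1` degree by degree. Substituting the binomial
coefficients defining `h_b` leaves a polynomial identity in `b` and `n`.
-/

theorem Nat.cast_choose_three (K : Type*) [DivisionRing K] [CharZero K] (a : ℕ) :
    (a.choose 3 : K) = a * (a - 1) * (a - 2) / 6 := by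
  simp [Nat.cast_choose_eq_descPochhammer_div, descPochhammer_succ_eval, Nat.factorial]

theorem Nat.cast_choose_four (K : Type*) [DivisionRing K] [CharZero K] (a : ℕ) :
    (a.choose 4 : K) = a * (a - 1) * (a - 2) * (a - 3) / 24 := by
  simp [Nat.cast_choose_eq_descPochhammer_div, descPochhammer_succ_eval, Nat.factorial]

namespace PowerSeries

variable {R : Type*} [CommRing R] {F G : R⟦X⟧}

section LowDegree

variable (F G)

theorem coeff_mul_at_one :
    coeff 1 (F * G) = constantCoeff F * coeff 1 G + coeff 1 F * constantCoeff G := by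
  simp [coeff_mul, Finset.Nat.sum_antidiagonal_eq_sum_range_succ_mk, Finset.sum_range_succ]

theorem coeff_mul_at_two :
    coeff 2 (F * G) =
      constantCoeff F * coeff 2 G + coeff 1 F * coeff 1 G + coeff 2 F * constantCoeff G := by
  simp [coeff_mul, Finset.Nat.sum_antidiagonal_eq_sum_range_succ_mk, Finset.sum_range_succ]

theorem coeff_mul_at_three :
    coeff 3 (F * G) = constantCoeff F * coeff 3 G + coeff 1 F * coeff 2 G +
      coeff 2 F * coeff 1 G + coeff 3 F * constantCoeff G := by
  simp [coeff_mul, Finset.Nat.sum_antidiagonal_eq_sum_range_succ_mk, Finset.sum_range_succ]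

end LowDegree

section Pow

variable (hF : constantCoeff F = 1) (m : ℕ)
include hF

theorem coeff_one_pow_of_constantCoeff_eq_one :
    coeff 1 (F ^ m) = m * coeff 1 F := by
  induction m with
  | zero => simp
  | succ m ih =>
    rw [pow_succ, coeff_mul_at_one, ih, map_pow, hF, one_pow]
    push_cast
    ring

theorem coeff_two_pow_of_constantCoeff_eq_one :
    coeff 2 (F ^ m) = m * coeff 2 F + m.choose 2 * coeff 1 F ^ 2 := by
  induction m with
  | zero => simp
  | succ m ih =>
    rw [pow_succ, coeff_mul_at_two, ih, coeff_one_pow_of_constantCoeff_eq_one hF, map_pow, hF,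
      one_pow, Nat.choose_succ_succ', Nat.choose_one_right]
    push_cast
    ring

theorem coeff_three_pow_of_constantCoeff_eq_one :
    coeff 3 (F ^ m) =
      m * coeff 3 F + 2 * m.choose 2 * coeff 1 F * coeff 2 F + m.choose 3 * coeff 1 F ^ 3 := by
  induction m with
  | zero => simp
  | succ m ih =>
    rw [pow_succ, coeff_mul_at_three, ih, coeff_one_pow_of_constantCoeff_eq_one hF,
      coeff_two_pow_of_constantCoeff_eq_one hF, map_pow, hF, one_pow, Nat.choose_succ_succ',
      Nat.choose_succ_succ', Nat.choose_one_right]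
    push_cast
    ring

end Pow

section Inverse

variable (hF : constantCoeff F = 1) (hFG : F * G = 1)
include hF hFG

theorem constantCoeff_eq_one_of_mul_eq_one : constantCoeff G = 1 := by
  simpa [hF] using congrArg constantCoeff hFG

theorem coeff_one_of_mul_eq_one : coeff 1 G = -coeff 1 F := by
  have h : coeff 1 (F * G) = 0 := by simp [hFG]
  rw [coeff_mul_at_one, hF, constantCoeff_eq_one_of_mul_eq_one hF hFG] at h
  linear_combination h

theorem coeff_two_of_mul_eq_one : coeff 2 G = coeff 1 F ^ 2 - coeff 2 F := by
  have h : coeff 2 (F * G) = 0 := by simp [hFG]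
  rw [coeff_mul_at_two, hF, constantCoeff_eq_one_of_mul_eq_one hF hFG,
    coeff_one_of_mul_eq_one hF hFG] at h
  linear_combination h

theorem coeff_three_of_mul_eq_one :
    coeff 3 G = 2 * coeff 1 F * coeff 2 F - coeff 1 F ^ 3 - coeff 3 F := by
  have h : coeff 3 (F * G) = 0 := by simp [hFG]
  rw [coeff_mul_at_three, hF, constantCoeff_eq_one_of_mul_eq_one hF hFG,
    coeff_one_of_mul_eq_one hF hFG, coeff_two_of_mul_eq_one hF hFG] at h
  linear_combination h

end Inverse

end PowerSeries

theorem coeff_hDivU (b i : ℕ) :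
    coeff i (hDivU b) = (-1 : ℚ) ^ i / b * b.choose (i + 1) * b.choose i := by
  simp only [hDivU, map_sum, coeff_C_mul_X_pow]
  rw [Finset.sum_ite_eq (Finset.range b)]
  split_ifs with h
  · rfl
  · rw [Nat.choose_eq_zero_of_lt (by simpa using h), Nat.cast_zero, mul_zero, zero_mul]

theorem constantCoeff_hDivU {b : ℕ} (hb : 1 ≤ b) : constantCoeff (hDivU b) = 1 := by
  have hb' : (b : ℚ) ≠ 0 := by positivity
  rw [← coeff_zero_eq_constantCoeff_apply, coeff_hDivU]
  simp [hb']

theorem coeff_one_hDivU (b : ℕ) : coeff 1 (hDivU b) = -(b * (b - 1) / 2 : ℚ) := by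
  rw [coeff_hDivU, Nat.cast_choose_two, Nat.choose_one_right]
  rcases eq_or_ne (b : ℚ) 0 with hb | hb
  · simp [hb]
  · field_simp

theorem coeff_two_hDivU (b : ℕ) : coeff 2 (hDivU b) = (b * (b - 1) ^ 2 * (b - 2) / 12 : ℚ) := by
  rw [coeff_hDivU, Nat.cast_choose_two, Nat.cast_choose_three]
  rcases eq_or_ne (b : ℚ) 0 with hb | hb
  · simp [hb]
  · field_simp
    ring

theorem coeff_three_hDivU (b : ℕ) :
    coeff 3 (hDivU b) = -(b * (b - 1) ^ 2 * (b - 2) ^ 2 * (b - 3) / 144 : ℚ) := by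
  rw [coeff_hDivU, Nat.cast_choose_three, Nat.cast_choose_four]
  rcases eq_or_ne (b : ℚ) 0 with hb | hb
  · simp [hb]
  · field_simp
    ring

theorem alphaC_eq_coeff {b k n : ℕ} (hk : k ≤ n) :
    alphaC b k n = coeff (n - k) ((hDivU b)⁻¹ ^ (n + 1)) := by
  rw [alphaC, coeffZ, if_pos (by omega)]
  congr
  omega

theorem stmt18 (b n : ℕ) (hb : 1 ≤ b) (hn : 3 ≤ n) :
    alphaC b (n - 3) n =
      ((n : ℚ) + 1) / 12 *
        ((3 * (n : ℚ) ^ 2 + 9 * n + 7) / 12 * (b : ℚ) ^ 3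
          - (3 * (n : ℚ) ^ 2 - 3 * n - 11) / 12 * (b : ℚ) ^ 2
          - (3 * (n : ℚ) + 2) / 3 * b - 1) * b * ((b : ℚ) - 1) ^ 2 := by
  have hF := constantCoeff_hDivU hb
  have hFG : hDivU b * (hDivU b)⁻¹ = 1 := PowerSeries.mul_inv_cancel _ (by simp [hF])
  rw [alphaC_eq_coeff (Nat.sub_le n 3), Nat.sub_sub_self hn,
    coeff_three_pow_of_constantCoeff_eq_one (constantCoeff_eq_one_of_mul_eq_one hF hFG),
    coeff_one_of_mul_eq_one hF hFG, coeff_two_of_mul_eq_one hF hFG,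
    coeff_three_of_mul_eq_one hF hFG, coeff_one_hDivU, coeff_two_hDivU, coeff_three_hDivU,
    Nat.cast_choose_two, Nat.cast_choose_three]
  push_cast
  ring
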